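/- arXiv:1805.06581 — 4 statements merged into one kernel-verified Lean document; each statement's English description precedes it below -/
import Mathlib

section
/- Let w be a fully commutative element of a Coxeter group and suppose x is obtained from w by a lower right star operation (removing the rightmost letter of a suitable reduced word). Then the maximal antichain size of the heap of x equals the maximal antichain size of the heap of w, i.e., n(x) = n(w). -/
open CoxeterSystem

def CommStep {B : Type*} (M : CoxeterMatrix B) (l l' : List B) : Prop :=
  ∃ (u v : List B) (a b : B), M a b = 2 ∧ l = u ++ a :: b :: v ∧ l' = u ++ b :: a :: v

def CommEquiv {B : Type*} (M : CoxeterMatrix B) : List B → List B → Prop :=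
  Relation.ReflTransGen fun l l' => CommStep M l l' ∨ CommStep M l' l

def FullyCommutative {B W : Type*} [Group W] {M : CoxeterMatrix B}
    (cs : CoxeterSystem M W) (w : W) : Prop :=
  ∀ l l', cs.IsReduced l → cs.wordProd l = w → cs.IsReduced l' → cs.wordProd l' = w →
    CommEquiv M l l'

/-- The heap order of a word: the reflexive transitive closure of `i ≺ j` whenever
`i < j` and the letters in positions `i`, `j` do not commute. -/
def heapLe {B : Type*} (M : CoxeterMatrix B) (ω : List B) :
    Fin ω.length → Fin ω.length → Prop :=
  Relation.ReflTransGen fun i j => (i : ℕ) < (j : ℕ) ∧ M (ω.get i) (ω.get j) ≠ 2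

/-- A finite set of positions is an antichain of the heap of `ω`. -/
def IsHeapAntichain {B : Type*} (M : CoxeterMatrix B) (ω : List B)
    (A : Finset (Fin ω.length)) : Prop :=
  ∀ i ∈ A, ∀ j ∈ A, i ≠ j → ¬ heapLe M ω i j

/-- `n(ω)`: the maximal cardinality of an antichain in the heap of `ω`. -/
noncomputable def heapN {B : Type*} (M : CoxeterMatrix B) (ω : List B) : ℕ :=
  sSup {n | ∃ A : Finset (Fin ω.length), IsHeapAntichain M ω A ∧ A.card = n}

section Stmt6Aux

variable {B : Type*} (M : CoxeterMatrix B)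

/-- The canonical embedding of positions of `ω` into positions of `ω ++ [c]`. -/
def heapEmb (ω : List B) (c : B) (i : Fin ω.length) : Fin (ω ++ [c]).length :=
  ⟨i, by have := i.isLt; simp⟩

lemma heapLe_le {ω : List B} {x y : Fin ω.length} (h : heapLe M ω x y) :
    (x : ℕ) ≤ (y : ℕ) := by
  induction h with
  | refl => exact le_refl _
  | tail _ h2 ih => exact ih.trans h2.1.le

lemma heapLe_emb {ω : List B} {c : B} {x y : Fin ω.length} (h : heapLe M ω x y) :
    heapLe M (ω ++ [c]) (heapEmb ω c x) (heapEmb ω c y) := by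
  induction h with
  | refl => exact Relation.ReflTransGen.refl
  | @tail m z _ h2 ih =>
    refine ih.tail ⟨h2.1, ?_⟩
    have hm : (m : ℕ) < ω.length := m.isLt
    have hz : (z : ℕ) < ω.length := z.isLt
    simpa [heapEmb, List.get_eq_getElem, List.getElem_append_left, hm, hz] using h2.2

lemma heapLe_restrict {ω : List B} {c : B} {x y : Fin (ω ++ [c]).length}
    (h : heapLe M (ω ++ [c]) x y) :
    ∀ (hx : (x : ℕ) < ω.length) (hy : (y : ℕ) < ω.length),
      heapLe M ω ⟨x, hx⟩ ⟨y, hy⟩ := by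
  induction h with
  | refl => intro hx hy; exact Relation.ReflTransGen.refl
  | @tail m z _ h2 ih =>
    intro hx hz
    have hm : (m : ℕ) < ω.length := lt_trans h2.1 hz
    refine (ih hx hm).tail ⟨h2.1, ?_⟩
    have := h2.2
    simpa [List.get_eq_getElem, List.getElem_append_left, hm, hz] using this

lemma heapN_concat (ω : List B) (c : B) (hne : ω ≠ [])
    (h2 : M (ω.getLast hne) c ≠ 2) :
    heapN M ω = heapN M (ω ++ [c]) := by
  have hω : 0 < ω.length := List.length_pos_iff.2 hne
  have hlenL : (ω ++ [c]).length = ω.length + 1 := by simp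
  let posA : Fin (ω ++ [c]).length := ⟨ω.length - 1, by omega⟩
  let lastI : Fin (ω ++ [c]).length := ⟨ω.length, by omega⟩
  have getPosA : (ω ++ [c]).get posA = ω.getLast hne := by
    have h1 : ω.length - 1 < ω.length := by omega
    simp only [posA, List.get_eq_getElem, List.getElem_append_left h1]
    exact (List.getLast_eq_getElem hne).symm
  have getLastI : (ω ++ [c]).get lastI = c := by
    simp only [lastI, List.get_eq_getElem]
    exact List.getElem_concat_length rfl (by omega)
  -- the single covering step `posA ≺ lastI`
  have hstep : heapLe M (ω ++ [c]) posA lastI := by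
    refine Relation.ReflTransGen.single ⟨?_, ?_⟩
    · show ω.length - 1 < ω.length; omega
    · rw [getPosA, getLastI]; exact h2
  -- nothing is strictly above `lastI`
  have above_last : ∀ y, heapLe M (ω ++ [c]) lastI y → y = lastI := by
    intro y hy
    have h1 : ω.length ≤ (y : ℕ) := heapLe_le M hy
    have h2' : (y : ℕ) < ω.length + 1 := by have := y.isLt; omega
    exact Fin.ext (show (y : ℕ) = ω.length by omega)
  -- the only elements above `posA` are `posA` and `lastI`
  have above_posA : ∀ y, heapLe M (ω ++ [c]) posA y → y = posA ∨ y = lastI := by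
    intro y hy
    rcases hy.cases_head with h | ⟨k, hk, hky⟩
    · exact Or.inl h.symm
    · have hk1 : (ω.length - 1 : ℕ) < (k : ℕ) := hk.1
      have hk2 : (k : ℕ) < ω.length + 1 := by have := k.isLt; omega
      have : k = lastI := Fin.ext (by simp only [lastI]; omega)
      subst this
      exact Or.inr (above_last y hky)
  have hset : {n | ∃ A : Finset (Fin ω.length), IsHeapAntichain M ω A ∧ A.card = n} =
      {n | ∃ A : Finset (Fin (ω ++ [c]).length),
        IsHeapAntichain M (ω ++ [c]) A ∧ A.card = n} := by
    ext n
    constructor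
    · rintro ⟨A, hA, rfl⟩
      have hinj : Function.Injective (heapEmb ω c) := by
        intro i j h
        have h' := congrArg Fin.val h
        exact Fin.ext h'
      refine ⟨A.map ⟨heapEmb ω c, hinj⟩, ?_, by simp⟩
      intro i hi j hj hij hle
      obtain ⟨i₀, hi₀, rfl⟩ := Finset.mem_map.1 hi
      obtain ⟨j₀, hj₀, rfl⟩ := Finset.mem_map.1 hj
      have hne' : i₀ ≠ j₀ := fun h => hij (by simp [h])
      have := heapLe_restrict M hle i₀.isLt j₀.isLt
      exact hA i₀ hi₀ j₀ hj₀ hne' this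
    · rintro ⟨A, hA, rfl⟩
      -- map positions down: `lastI ↦ posA`, others identity
      let d : Fin (ω ++ [c]).length → Fin ω.length :=
        fun j => ⟨min (j : ℕ) (ω.length - 1), by
          have := min_le_right (j : ℕ) (ω.length - 1); omega⟩
      have hd_small : ∀ j : Fin (ω ++ [c]).length, (j : ℕ) < ω.length →
          ((d j : ℕ) = (j : ℕ)) := by
        intro j hj
        simp only [d]; omega
      have hd_last : ((d lastI : ℕ)) = ω.length - 1 := by simp only [d, lastI]; omega
      have hinjOn : Set.InjOn d A := by
        intro i hi j hj hdij
        by_contra hne'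
        have hvals : min (i : ℕ) (ω.length - 1) = min (j : ℕ) (ω.length - 1) :=
          congrArg Fin.val hdij
        have hi1 : (i : ℕ) < ω.length + 1 := by have := i.isLt; omega
        have hj1 : (j : ℕ) < ω.length + 1 := by have := j.isLt; omega
        have hvne : (i : ℕ) ≠ (j : ℕ) := fun h => hne' (Fin.ext h)
        -- one of them must be `ω.length`, the other `ω.length - 1`
        have hcase : ((i : ℕ) = ω.length ∧ (j : ℕ) = ω.length - 1) ∨
            ((j : ℕ) = ω.length ∧ (i : ℕ) = ω.length - 1) := by omega
        rcases hcase with ⟨h1, h2'⟩ | ⟨h1, h2'⟩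
        · exact hA ⟨_, _⟩ (by rwa [show (⟨_, _⟩ : Fin _) = j from Fin.ext (by simp [posA, h2'])])
            ⟨_, _⟩ (by rwa [show (⟨_, _⟩ : Fin _) = i from Fin.ext (by simp [lastI, h1])])
            (by intro h; have := congrArg Fin.val h; simp [posA, lastI] at this; omega) hstep
        · exact hA ⟨_, _⟩ (by rwa [show (⟨_, _⟩ : Fin _) = i from Fin.ext (by simp [posA, h2'])])
            ⟨_, _⟩ (by rwa [show (⟨_, _⟩ : Fin _) = j from Fin.ext (by simp [lastI, h1])])
            (by intro h; have := congrArg Fin.val h; simp [posA, lastI] at this; omega) hstep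
      refine ⟨A.image d, ?_, Finset.card_image_of_injOn hinjOn⟩
      intro i' hi' j' hj' hij' hle'
      obtain ⟨i, hi, rfl⟩ := Finset.mem_image.1 hi'
      obtain ⟨j, hj, rfl⟩ := Finset.mem_image.1 hj'
      have hlift : heapLe M (ω ++ [c]) (heapEmb ω c (d i)) (heapEmb ω c (d j)) :=
        heapLe_emb M hle'
      by_cases hil : i = lastI
      · -- then `heapEmb (d i) = posA`, and everything above `posA` is `posA` or `lastI`,
        -- both impossible for `heapEmb (d j)`.
        have hei : heapEmb ω c (d i) = posA := by
          apply Fin.ext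
          simp only [heapEmb, posA, hil, hd_last]
        rw [hei] at hlift
        rcases above_posA _ hlift with h | h
        · have : (d j : ℕ) = ω.length - 1 := by
            have := congrArg Fin.val h; simpa [heapEmb, posA] using this
          apply hij'
          apply Fin.ext
          rw [this]
          have := congrArg Fin.val hei
          simp only [heapEmb, posA] at this
          rw [hil] at *
          simp [hd_last]
        · have := congrArg Fin.val h
          simp only [heapEmb, lastI] at this
          have := (d j).isLt
          omega
      · -- `i ≠ lastI`, so `heapEmb (d i) = i`
        have hiv : (i : ℕ) < ω.length := by
          have h1 : (i : ℕ) < ω.length + 1 := by have := i.isLt; omega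
          have h2' : (i : ℕ) ≠ ω.length := fun h => hil (Fin.ext h)
          omega
        have hei : heapEmb ω c (d i) = i := Fin.ext (by
          simp only [heapEmb]; exact hd_small i hiv)
        rw [hei] at hlift
        by_cases hjl : j = lastI
        · -- `heapEmb (d j) = posA`; then `i ≤ posA ≺ lastI`, contradiction
          have hej : heapEmb ω c (d j) = posA := by
            apply Fin.ext
            simp only [heapEmb, posA, hjl, hd_last]
          rw [hej] at hlift
          have : heapLe M (ω ++ [c]) i lastI := hlift.trans hstep
          exact hA i hi lastI (hjl ▸ hj) (fun h => hil h) this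
        · have hjv : (j : ℕ) < ω.length := by
            have h1 : (j : ℕ) < ω.length + 1 := by have := j.isLt; omega
            have h2' : (j : ℕ) ≠ ω.length := fun h => hjl (Fin.ext h)
            omega
          have hej : heapEmb ω c (d j) = j := Fin.ext (by
            simp only [heapEmb]; exact hd_small j hjv)
          rw [hej] at hlift
          have hije : i ≠ j := by
            intro h; exact hij' (by rw [h])
          exact hA i hi j hj hije hlift
  simp only [heapN]
  rw [hset]

end Stmt6Aux

/-- a lower right star operation on a fully commutative element (removal of
the rightmost letter `b` of a reduced word ending `… a b` with `m(a,b) ≥ 3`) preserves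
the maximal antichain size of the heap: `n(x) = n(w)`. -/
theorem stmt6 {B W : Type*} [Group W] {M : CoxeterMatrix B} (cs : CoxeterSystem M W)
    (l : List B) (a b : B) (hm : 3 ≤ M a b)
    (hred : cs.IsReduced (l ++ [a, b]))
    (hfc : FullyCommutative cs (cs.wordProd (l ++ [a, b]))) :
    heapN M (l ++ [a]) = heapN M (l ++ [a, b]) := by
  have hE : l ++ [a, b] = (l ++ [a]) ++ [b] := by simp
  rw [hE]
  have hne : l ++ [a] ≠ [] := by simp
  have hlast : (l ++ [a]).getLast hne = a := by simp
  refine heapN_concat M (l ++ [a]) b hne ?_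
  rw [hlast]
  omega
end

section
/- Let W be the Coxeter group of type A_n (diagram a path with all edge weights 3), let w be a fully commutative element of W, and let s be a generator. Then every open s-interval in the heap H(w) contains exactly two elements whose labels are adjacent to s in the diagram, and these two labels are distinct. In particular, if s is an endpoint of the path, then any reduced word of w contains at most one occurrence of s. -/
open CoxeterSystem

def heapLt {B : Type*} (M : CoxeterMatrix B) (ω : List B) (i j : Fin ω.length) : Prop :=
  heapLe M ω i j ∧ i ≠ j

set_option maxHeartbeats 1000000

namespace Stmt8Aux

variable {B : Type*} {M : CoxeterMatrix B}

lemma commStep_count {l l' : List B} [DecidableEq B] (h : CommStep M l l') (a : B) :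
    l.count a = l'.count a := by
  obtain ⟨u, v, x, y, _, rfl, rfl⟩ := h
  simp [List.count_append, List.count_cons]
  omega

lemma commEquiv_count {l l' : List B} [DecidableEq B] (h : CommEquiv M l l') (a : B) :
    l.count a = l'.count a := by
  induction h with
  | refl => rfl
  | tail _ h ih =>
    rcases h with h | h
    · rw [ih, commStep_count h]
    · rw [ih, ← commStep_count h]

lemma commStep_length {l l' : List B} (h : CommStep M l l') : l.length = l'.length := by
  obtain ⟨u, v, x, y, _, rfl, rfl⟩ := h
  simp

lemma commEquiv_length {l l' : List B} (h : CommEquiv M l l') : l.length = l'.length := by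
  induction h with
  | refl => rfl
  | tail _ h ih =>
    rcases h with h | h
    · rw [ih, commStep_length h]
    · rw [ih, ← commStep_length h]

lemma commEquiv_symm {l l' : List B} (h : CommEquiv M l l') : CommEquiv M l' l := by
  induction h with
  | refl => exact .refl
  | tail _ h ih => exact Relation.ReflTransGen.trans (Relation.ReflTransGen.single h.symm) ih

lemma commStep_append {l l' : List B} (u v : List B) (h : CommStep M l l') :
    CommStep M (u ++ l ++ v) (u ++ l' ++ v) := by
  obtain ⟨p, q, x, y, hxy, rfl, rfl⟩ := h
  exact ⟨u ++ p, q ++ v, x, y, hxy, by simp, by simp⟩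

lemma commEquiv_append {l l' : List B} (u v : List B) (h : CommEquiv M l l') :
    CommEquiv M (u ++ l ++ v) (u ++ l' ++ v) := by
  induction h with
  | refl => exact .refl
  | tail _ h ih =>
    refine Relation.ReflTransGen.tail ih ?_
    rcases h with h | h
    · exact Or.inl (commStep_append u v h)
    · exact Or.inr (commStep_append u v h)

lemma commEquiv_move (s : B) (m v : List B) (hm : ∀ a ∈ m, M a s = 2) :
    CommEquiv M (s :: (m ++ v)) (m ++ s :: v) := by
  induction m generalizing v with
  | nil => exact .refl
  | cons a m ih =>
    have h1 : CommStep M (s :: a :: (m ++ v)) (a :: s :: (m ++ v)) :=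
      ⟨[], m ++ v, s, a, by rw [M.symmetric]; exact hm a (by simp), rfl, rfl⟩
    have h2 : CommEquiv M (a :: (s :: (m ++ v))) (a :: (m ++ s :: v)) := by
      have := commEquiv_append [a] [] (ih v (fun b hb => hm b (by simp [hb])))
      simpa using this
    exact Relation.ReflTransGen.trans (Relation.ReflTransGen.single (Or.inl h1)) h2

variable {W : Type*} [Group W] (cs : CoxeterSystem M W)

lemma simple_comm {a b : B} (h : M a b = 2) :
    cs.simple a * cs.simple b = cs.simple b * cs.simple a := by
  have h1 := cs.simple_mul_simple_pow a b
  rw [h, sq] at h1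
  have h2 : cs.simple a * cs.simple b = (cs.simple a * cs.simple b)⁻¹ :=
    eq_inv_of_mul_eq_one_left h1
  rw [h2, mul_inv_rev, cs.inv_simple, cs.inv_simple]

lemma simple_braid {a b : B} (h : M a b = 3) :
    cs.simple a * cs.simple b * cs.simple a = cs.simple b * cs.simple a * cs.simple b := by
  have h1 := cs.simple_mul_simple_pow a b
  rw [h, pow_succ, pow_succ, pow_one] at h1
  have h3 : cs.simple a * cs.simple b * cs.simple a = (cs.simple b * cs.simple a * cs.simple b)⁻¹ := by
    rw [eq_inv_iff_mul_eq_one, ← h1]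
    group
  rw [h3, mul_inv_rev, mul_inv_rev, cs.inv_simple, cs.inv_simple]
  exact (mul_assoc _ _ _).symm

lemma commStep_wordProd {l l' : List B} (h : CommStep M l l') :
    cs.wordProd l = cs.wordProd l' := by
  obtain ⟨u, v, x, y, hxy, rfl, rfl⟩ := h
  simp only [cs.wordProd_append, cs.wordProd_cons]
  rw [← mul_assoc (cs.simple x), ← mul_assoc (cs.simple y), simple_comm cs hxy]

lemma commEquiv_wordProd {l l' : List B} (h : CommEquiv M l l') :
    cs.wordProd l = cs.wordProd l' := by
  induction h with
  | refl => rfl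
  | tail _ h ih =>
    rcases h with h | h
    · rw [ih, commStep_wordProd cs h]
    · rw [ih, ← commStep_wordProd cs h]

lemma commEquiv_isReduced {l l' : List B} (h : CommEquiv M l l') (hred : cs.IsReduced l) :
    cs.IsReduced l' := by
  unfold CoxeterSystem.IsReduced at *
  rw [← commEquiv_wordProd cs h, ← commEquiv_length h]
  exact hred

lemma no_ss {u v : List B} {a : B} (hred : cs.IsReduced (u ++ a :: a :: v)) : False := by
  have h1 : cs.wordProd (u ++ a :: a :: v) = cs.wordProd (u ++ v) := by
    rw [cs.wordProd_append, cs.wordProd_append, cs.wordProd_cons, cs.wordProd_cons,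
      cs.simple_mul_simple_cancel_left]
  have h2 := cs.length_wordProd_le (u ++ v)
  unfold CoxeterSystem.IsReduced at hred
  rw [h1] at hred
  simp only [List.length_append, List.length_cons] at hred h2
  omega

/-- first occurrence satisfying a predicate -/
lemma countP_pos_split {p : B → Bool} {m : List B} (h : 0 < m.countP p) :
    ∃ m₁ a m₂, m = m₁ ++ a :: m₂ ∧ p a ∧ m₁.countP p = 0 := by
  induction m with
  | nil => simp at h
  | cons b m ih =>
    by_cases hb : p b
    · exact ⟨[], b, m, rfl, hb, rfl⟩
    · rw [List.countP_cons, if_neg hb] at h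
      obtain ⟨m₁, a, m₂, rfl, ha, h1⟩ := ih (by omega)
      exact ⟨b :: m₁, a, m₂, rfl, ha, by rw [List.countP_cons, if_neg hb]; simpa using h1⟩

lemma countP_one_split {p : B → Bool} {m : List B} (h : m.countP p = 1) :
    ∃ m₁ a m₂, m = m₁ ++ a :: m₂ ∧ p a ∧ m₁.countP p = 0 ∧ m₂.countP p = 0 := by
  obtain ⟨m₁, a, m₂, rfl, ha, h1⟩ := countP_pos_split (p := p) (m := m) (by omega)
  refine ⟨m₁, a, m₂, rfl, ha, h1, ?_⟩
  have key : (m₁ ++ a :: m₂).countP p = m₁.countP p + (m₂.countP p + 1) := by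
    simp [List.countP_append, List.countP_cons, ha]
  omega

lemma countP_two_split {p : B → Bool} {m : List B} (h : 2 ≤ m.countP p) :
    ∃ m₁ a m₂ b m₃, m = m₁ ++ a :: m₂ ++ b :: m₃ ∧ p a ∧ p b ∧ m₂.countP p = 0 := by
  obtain ⟨m₁, a, m', rfl, ha, h1⟩ := countP_pos_split (p := p) (m := m) (by omega)
  have key : (m₁ ++ a :: m').countP p = m₁.countP p + (m'.countP p + 1) := by
    simp [List.countP_append, List.countP_cons, ha]
  obtain ⟨m₂, b, m₃, rfl, hb, h2⟩ := countP_pos_split (p := p) (m := m') (by omega)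
  exact ⟨m₁, a, m₂, b, m₃, by simp, ha, hb, h2⟩

lemma countP_le_add {p q r : B → Bool} {m : List B} (h : ∀ a ∈ m, r a → p a ∨ q a) :
    m.countP r ≤ m.countP p + m.countP q := by
  induction m with
  | nil => simp
  | cons b m ih =>
    have hb := h b (by simp)
    have ih' := ih (fun a ha => h a (by simp [ha]))
    simp only [List.countP_cons]
    by_cases hr : r b
    · rcases hb hr with hp | hq
      · rw [if_pos hr, if_pos hp]
        split <;> omega
      · rw [if_pos hr, if_pos hq]
        split <;> omega
    · rw [if_neg hr]
      split <;> split <;> omega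

lemma countP_unique_idx {p : B → Bool} {m m₁ m₂ : List B} {a : B}
    (hm : m = m₁ ++ a :: m₂) (h1 : m₁.countP p = 0) (h2 : m₂.countP p = 0)
    {r : ℕ} (hr : r < m.length) (hx : p (m[r]'hr)) : r = m₁.length := by
  subst hm
  rcases lt_trichotomy r m₁.length with hlt | heq | hgt
  · exfalso
    rw [List.getElem_append_left hlt] at hx
    have : 0 < m₁.countP p := List.countP_pos_iff.mpr ⟨m₁[r]'hlt, List.getElem_mem _, hx⟩
    omega
  · exact heq
  · exfalso
    have hr' : m₁.length ≤ r := hgt.le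
    rw [List.getElem_append_right hr', List.getElem_cons, dif_neg (by omega)] at hx
    have hlen : r - m₁.length - 1 < m₂.length := by
      simp only [List.length_append, List.length_cons] at hr
      omega
    have : 0 < m₂.countP p := List.countP_pos_iff.mpr ⟨_, List.getElem_mem hlen, hx⟩
    omega

end Stmt8Aux

namespace Stmt8Aux

lemma heapLe_val_le {B : Type*} {M : CoxeterMatrix B} {ω : List B} {i j : Fin ω.length}
    (h : heapLe M ω i j) : (i : ℕ) ≤ (j : ℕ) := by
  induction h with
  | refl => exact le_refl _
  | tail _ h ih => exact le_trans ih (le_of_lt h.1)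

lemma heapLt_val_lt {B : Type*} {M : CoxeterMatrix B} {ω : List B} {i j : Fin ω.length}
    (h : heapLt M ω i j) : (i : ℕ) < (j : ℕ) := by
  rcases lt_of_le_of_ne (heapLe_val_le h.1) (fun he => h.2 (Fin.ext he)) with h'
  exact h'

lemma heapLt_single {B : Type*} {M : CoxeterMatrix B} {ω : List B} {i j : Fin ω.length}
    (h1 : (i : ℕ) < (j : ℕ)) (h2 : M (ω.get i) (ω.get j) ≠ 2) : heapLt M ω i j :=
  ⟨Relation.ReflTransGen.single ⟨h1, h2⟩,
   fun he => absurd (congrArg Fin.val he) (Nat.ne_of_lt h1)⟩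

lemma split_two {α : Type*} (ω : List α) (i j : ℕ) (hij : i < j) (hj : j < ω.length) :
    ω = ω.take i ++ (ω[i]'(by omega)) ::
      (((ω.take j).drop (i+1)) ++ (ω[j]'hj) :: ω.drop (j+1)) := by
  have hi : i < ω.length := by omega
  have hitj : i < (ω.take j).length := by
    rw [List.length_take]; omega
  have h1 : ω.take j = ω.take i ++ (ω[i]'hi) :: (ω.take j).drop (i+1) := by
    conv_lhs => rw [← List.take_append_drop i (ω.take j)]
    rw [List.take_take, min_eq_left hij.le, List.drop_eq_getElem_cons hitj, List.getElem_take]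
  conv_lhs => rw [← List.take_append_drop j ω, List.drop_eq_getElem_cons hj, h1]
  simp

lemma split_two' {α : Type*} (ω : List α) (i j : ℕ) (hij : i < j) (hj : j < ω.length) :
    ∃ u m v : List α, ω = u ++ (ω[i]'(by omega)) :: (m ++ (ω[j]'hj) :: v) ∧
      u.length = i ∧ m.length = j - (i+1) ∧
      ∀ (r : ℕ) (hr : r < m.length) (hr2 : i+1+r < ω.length), m[r]'hr = ω[i+1+r]'hr2 := by
  refine ⟨ω.take i, (ω.take j).drop (i+1), ω.drop (j+1), split_two ω i j hij hj, ?_, ?_, ?_⟩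
  · simp [List.length_take]
    omega
  · simp only [List.length_drop, List.length_take]
    omega
  · intro r hr hr2
    rw [List.getElem_drop, List.getElem_take]

section TypeA

variable {W : Type*} [Group W] {n : ℕ} {M : CoxeterMatrix (Fin n)}

def IsTypeA {n : ℕ} (M : CoxeterMatrix (Fin n)) : Prop :=
  ∀ i j : Fin n, M i j =
    if i = j then 1 else if (i : ℕ) + 1 = (j : ℕ) ∨ (j : ℕ) + 1 = (i : ℕ) then 3 else 2

lemma M_diag (hM : IsTypeA M) (s : Fin n) : M s s = 1 := by rw [hM]; simp

lemma M_of_adj (hM : IsTypeA M) {a b : Fin n} (h : (a:ℕ)+1 = (b:ℕ) ∨ (b:ℕ)+1 = (a:ℕ)) :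
    M a b = 3 := by
  have hne : a ≠ b := by
    intro he; subst he; omega
  rw [hM, if_neg hne, if_pos h]

lemma adj_of_ne_two (hM : IsTypeA M) {a b : Fin n} (hne : a ≠ b) (h : M a b ≠ 2) :
    (a:ℕ)+1 = (b:ℕ) ∨ (b:ℕ)+1 = (a:ℕ) := by
  by_contra hc
  rw [hM a b, if_neg hne, if_neg hc] at h
  exact h rfl

lemma adj_of_eq_three (hM : IsTypeA M) {a b : Fin n} (h : M a b = 3) :
    (a:ℕ)+1 = (b:ℕ) ∨ (b:ℕ)+1 = (a:ℕ) := by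
  by_cases hne : a = b
  · subst hne; rw [M_diag hM] at h; omega
  · exact adj_of_ne_two hM hne (by omega)

/-- The key "interval" lemma: between two consecutive occurrences of `t` in a reduced
word of a fully commutative element, at least two letters do not commute with `t`. -/
lemma weak (cs : CoxeterSystem M W) (hM : IsTypeA M) (w : W) (hfc : FullyCommutative cs w)
    {u m v : List (Fin n)} {t : Fin n}
    (hred : cs.IsReduced (u ++ t :: (m ++ t :: v)))
    (hw : cs.wordProd (u ++ t :: (m ++ t :: v)) = w)
    (hnt : ∀ a ∈ m, a ≠ t) :
    2 ≤ m.countP (fun a => decide (M a t ≠ 2)) := by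
  by_contra hlt
  push_neg at hlt
  have h01 : m.countP (fun a => decide (M a t ≠ 2)) = 0 ∨
      m.countP (fun a => decide (M a t ≠ 2)) = 1 := by omega
  rcases h01 with h0 | h1
  · -- all letters of m commute with t: contradiction with reducedness
    have hcomm : ∀ a ∈ m, M a t = 2 := by
      intro a ha
      have := List.countP_eq_zero.mp h0 a ha
      simpa using this
    have e1 : CommEquiv M (u ++ t :: (m ++ t :: v)) (u ++ (m ++ t :: t :: v)) := by
      have := commEquiv_append u [] (commEquiv_move t m (t :: v) hcomm)
      simpa using this
    have hred' : cs.IsReduced ((u ++ m) ++ t :: t :: v) := by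
      have := commEquiv_isReduced cs e1 hred
      simpa [List.append_assoc] using this
    exact no_ss cs hred'
  · -- exactly one letter of m fails to commute with t
    obtain ⟨m₁, a, m₂, hm, ha, hc1, hc2⟩ := countP_one_split h1
    have hat : a ≠ t := hnt a (by rw [hm]; simp)
    have hMat : M a t ≠ 2 := by simpa using ha
    have hadj : (a:ℕ)+1 = (t:ℕ) ∨ (t:ℕ)+1 = (a:ℕ) := adj_of_ne_two hM hat hMat
    have h3 : M t a = 3 := by
      rw [M.symmetric]; exact M_of_adj hM hadj
    have hcomm1 : ∀ b ∈ m₁, M b t = 2 := by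
      intro b hb
      have := List.countP_eq_zero.mp hc1 b hb
      simpa using this
    have hcomm2 : ∀ b ∈ m₂, M b t = 2 := by
      intro b hb
      have := List.countP_eq_zero.mp hc2 b hb
      simpa using this
    subst hm
    -- l₁ : move everything commuting out of the way
    set l₁ : List (Fin n) := u ++ (m₁ ++ t :: a :: t :: (m₂ ++ v)) with hl₁
    set l₂ : List (Fin n) := u ++ (m₁ ++ a :: t :: a :: (m₂ ++ v)) with hl₂
    have eA : CommEquiv M (u ++ t :: ((m₁ ++ a :: m₂) ++ t :: v))
        (u ++ (m₁ ++ t :: (a :: (m₂ ++ t :: v)))) := by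
      have := commEquiv_append u [] (commEquiv_move t m₁ (a :: (m₂ ++ t :: v)) hcomm1)
      simpa [List.append_assoc] using this
    have eB : CommEquiv M (u ++ (m₁ ++ t :: (a :: (m₂ ++ t :: v)))) l₁ := by
      have := commEquiv_append (u ++ m₁ ++ [t, a]) []
        (commEquiv_symm (commEquiv_move t m₂ v hcomm2))
      simpa [hl₁, List.append_assoc] using this
    have key : CommEquiv M (u ++ t :: ((m₁ ++ a :: m₂) ++ t :: v)) l₁ :=
      Relation.ReflTransGen.trans eA eB
    have hred₁ : cs.IsReduced l₁ := commEquiv_isReduced cs key hred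
    have hw₁ : cs.wordProd l₁ = w := by
      rw [← commEquiv_wordProd cs key]; exact hw
    have hππ : cs.wordProd l₁ = cs.wordProd l₂ := by
      rw [hl₁, hl₂]
      simp only [cs.wordProd_append, cs.wordProd_cons]
      have hb := simple_braid cs h3
      have : cs.simple t * (cs.simple a * (cs.simple t * (cs.wordProd m₂ * cs.wordProd v))) =
          cs.simple a * (cs.simple t * (cs.simple a * (cs.wordProd m₂ * cs.wordProd v))) := by
        rw [← mul_assoc, ← mul_assoc, hb, mul_assoc, mul_assoc]
      rw [this]
    have hw₂ : cs.wordProd l₂ = w := by rw [← hππ]; exact hw₁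
    have hlen12 : l₁.length = l₂.length := by rw [hl₁, hl₂]; simp
    have hred₂ : cs.IsReduced l₂ := by
      unfold CoxeterSystem.IsReduced at *
      rw [← hππ, ← hlen12]; exact hred₁
    have hcnt := commEquiv_count (hfc l₁ l₂ hred₁ hw₁ hred₂ hw₂) t
    rw [hl₁, hl₂] at hcnt
    have hta : ¬ (t = a) := fun he => hat he.symm
    simp [List.count_append, List.count_cons, hta, hat] at hcnt

end TypeA

end Stmt8Aux

namespace Stmt8Aux

variable {W : Type*} [Group W] {n : ℕ} {M : CoxeterMatrix (Fin n)}

lemma descentDown (cs : CoxeterSystem M W) (hM : IsTypeA M) (w : W)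
    (hfc : FullyCommutative cs w) :
    ∀ (d : ℕ) (t : Fin n) (u m v : List (Fin n)), (t : ℕ) < d →
      cs.IsReduced (u ++ t :: (m ++ t :: v)) → cs.wordProd (u ++ t :: (m ++ t :: v)) = w →
      (∀ a ∈ m, a ≠ t) → (∀ a ∈ m, (a : ℕ) ≠ (t : ℕ) + 1) → False := by
  intro d
  induction d with
  | zero => intro t u m v ht; omega
  | succ d ih =>
    intro t u m v ht hred hw hnt hnt1
    have h2 := weak cs hM w hfc hred hw hnt
    have h2' : 2 ≤ m.countP (fun a : Fin n => decide ((a : ℕ) + 1 = (t : ℕ))) := by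
      refine le_trans h2 (List.countP_mono_left ?_)
      intro a ha hp
      have hMat : M a t ≠ 2 := by simpa using hp
      have hadj := adj_of_ne_two hM (hnt a ha) hMat
      have := hnt1 a ha
      simp only [decide_eq_true_eq]
      omega
    obtain ⟨m₁, x, m₂, y, m₃, hm, hx, hy, h0⟩ := countP_two_split h2'
    have hx' : (x : ℕ) + 1 = (t : ℕ) := by simpa using hx
    have hy' : (y : ℕ) + 1 = (t : ℕ) := by simpa using hy
    have hxy : x = y := Fin.ext (by omega)
    subst hxy
    subst hm
    have heq : u ++ t :: ((m₁ ++ x :: m₂ ++ x :: m₃) ++ t :: v) =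
        (u ++ t :: m₁) ++ x :: (m₂ ++ x :: (m₃ ++ t :: v)) := by simp
    rw [heq] at hred hw
    refine ih x (u ++ t :: m₁) m₂ (m₃ ++ t :: v) (by omega) hred hw ?_ ?_
    · intro a ha
      have := List.countP_eq_zero.mp h0 a ha
      simp only [decide_eq_true_eq] at this
      intro he; subst he; omega
    · intro a ha
      have : a ∈ m₁ ++ x :: m₂ ++ x :: m₃ := by simp [ha]
      have := hnt a this
      intro hc
      exact this (Fin.ext (by omega))

lemma descentUp (cs : CoxeterSystem M W) (hM : IsTypeA M) (w : W)
    (hfc : FullyCommutative cs w) :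
    ∀ (d : ℕ) (t : Fin n) (u m v : List (Fin n)), n - (t : ℕ) ≤ d →
      cs.IsReduced (u ++ t :: (m ++ t :: v)) → cs.wordProd (u ++ t :: (m ++ t :: v)) = w →
      (∀ a ∈ m, a ≠ t) → (∀ a ∈ m, (a : ℕ) + 1 ≠ (t : ℕ)) → False := by
  intro d
  induction d with
  | zero =>
    intro t u m v ht
    have := t.isLt
    omega
  | succ d ih =>
    intro t u m v ht hred hw hnt hnt1
    have h2 := weak cs hM w hfc hred hw hnt
    have h2' : 2 ≤ m.countP (fun a : Fin n => decide ((t : ℕ) + 1 = (a : ℕ))) := by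
      refine le_trans h2 (List.countP_mono_left ?_)
      intro a ha hp
      have hMat : M a t ≠ 2 := by simpa using hp
      have hadj := adj_of_ne_two hM (hnt a ha) hMat
      have := hnt1 a ha
      simp only [decide_eq_true_eq]
      omega
    obtain ⟨m₁, x, m₂, y, m₃, hm, hx, hy, h0⟩ := countP_two_split h2'
    have hx' : (t : ℕ) + 1 = (x : ℕ) := by simpa using hx
    have hy' : (t : ℕ) + 1 = (y : ℕ) := by simpa using hy
    have hxy : x = y := Fin.ext (by omega)
    subst hxy
    subst hm
    have heq : u ++ t :: ((m₁ ++ x :: m₂ ++ x :: m₃) ++ t :: v) =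
        (u ++ t :: m₁) ++ x :: (m₂ ++ x :: (m₃ ++ t :: v)) := by simp
    rw [heq] at hred hw
    have hxval : n - (x : ℕ) ≤ d := by
      have := x.isLt
      omega
    refine ih x (u ++ t :: m₁) m₂ (m₃ ++ t :: v) hxval hred hw ?_ ?_
    · intro a ha
      have := List.countP_eq_zero.mp h0 a ha
      simp only [decide_eq_true_eq] at this
      intro he; subst he; omega
    · intro a ha
      have : a ∈ m₁ ++ x :: m₂ ++ x :: m₃ := by simp [ha]
      have := hnt a this
      intro hc
      exact this (Fin.ext (by omega))

lemma below_le_one (cs : CoxeterSystem M W) (hM : IsTypeA M) (w : W)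
    (hfc : FullyCommutative cs w) {u m v : List (Fin n)} {t : Fin n}
    (hred : cs.IsReduced (u ++ t :: (m ++ t :: v)))
    (hw : cs.wordProd (u ++ t :: (m ++ t :: v)) = w)
    (hnt : ∀ a ∈ m, a ≠ t) :
    m.countP (fun a : Fin n => decide ((a : ℕ) + 1 = (t : ℕ))) ≤ 1 := by
  by_contra h
  push_neg at h
  obtain ⟨m₁, x, m₂, y, m₃, hm, hx, hy, h0⟩ := countP_two_split h
  have hx' : (x : ℕ) + 1 = (t : ℕ) := by simpa using hx
  have hy' : (y : ℕ) + 1 = (t : ℕ) := by simpa using hy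
  have hxy : x = y := Fin.ext (by omega)
  subst hxy
  subst hm
  have heq : u ++ t :: ((m₁ ++ x :: m₂ ++ x :: m₃) ++ t :: v) =
      (u ++ t :: m₁) ++ x :: (m₂ ++ x :: (m₃ ++ t :: v)) := by simp
  rw [heq] at hred hw
  refine descentDown cs hM w hfc ((x : ℕ) + 1) x (u ++ t :: m₁) m₂ (m₃ ++ t :: v)
    (by omega) hred hw ?_ ?_
  · intro a ha
    have := List.countP_eq_zero.mp h0 a ha
    simp only [decide_eq_true_eq] at this
    intro he; subst he; omega
  · intro a ha
    have : a ∈ m₁ ++ x :: m₂ ++ x :: m₃ := by simp [ha]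
    have := hnt a this
    intro hc
    exact this (Fin.ext (by omega))

lemma above_le_one (cs : CoxeterSystem M W) (hM : IsTypeA M) (w : W)
    (hfc : FullyCommutative cs w) {u m v : List (Fin n)} {t : Fin n}
    (hred : cs.IsReduced (u ++ t :: (m ++ t :: v)))
    (hw : cs.wordProd (u ++ t :: (m ++ t :: v)) = w)
    (hnt : ∀ a ∈ m, a ≠ t) :
    m.countP (fun a : Fin n => decide ((t : ℕ) + 1 = (a : ℕ))) ≤ 1 := by
  by_contra h
  push_neg at h
  obtain ⟨m₁, x, m₂, y, m₃, hm, hx, hy, h0⟩ := countP_two_split h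
  have hx' : (t : ℕ) + 1 = (x : ℕ) := by simpa using hx
  have hy' : (t : ℕ) + 1 = (y : ℕ) := by simpa using hy
  have hxy : x = y := Fin.ext (by omega)
  subst hxy
  subst hm
  have heq : u ++ t :: ((m₁ ++ x :: m₂ ++ x :: m₃) ++ t :: v) =
      (u ++ t :: m₁) ++ x :: (m₂ ++ x :: (m₃ ++ t :: v)) := by simp
  rw [heq] at hred hw
  refine descentUp cs hM w hfc (n - (x : ℕ)) x (u ++ t :: m₁) m₂ (m₃ ++ t :: v)
    (le_refl _) hred hw ?_ ?_
  · intro a ha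
    have := List.countP_eq_zero.mp h0 a ha
    simp only [decide_eq_true_eq] at this
    intro he; subst he; omega
  · intro a ha
    have : a ∈ m₁ ++ x :: m₂ ++ x :: m₃ := by simp [ha]
    have := hnt a this
    intro hc
    exact this (Fin.ext (by omega))

end Stmt8Aux

namespace Stmt8Aux

lemma getElem_of_eq' {α : Type*} {l l' : List α} (h : l = l') {i : ℕ} (hi : i < l.length) :
    l[i]'hi = l'[i]'(h ▸ hi) := by cases h; rfl

lemma getElem_idx_congr {α : Type*} {l : List α} {i j : ℕ} (h : i = j) (hi : i < l.length) :
    l[i]'hi = l[j]'(h ▸ hi) := by subst h; rfl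

lemma getElem_append_middle {α : Type*} (p q : List α) (x : α) {i : ℕ} (hi : i = p.length)
    (h : i < (p ++ x :: q).length) : (p ++ x :: q)[i]'h = x := by
  subst hi
  rw [List.getElem_append_right (le_refl _)]
  simp

variable {W : Type*} [Group W] {n : ℕ} {M : CoxeterMatrix (Fin n)}

lemma main1 (cs : CoxeterSystem M W) (hM : IsTypeA M) (w : W) (hfc : FullyCommutative cs w) :
    ∀ ω : List (Fin n), cs.IsReduced ω → cs.wordProd ω = w →
      ∀ (s : Fin n) (i j : Fin ω.length), ω.get i = s → ω.get j = s → heapLt M ω i j →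
        (∀ k, ω.get k = s → ¬ (heapLt M ω i k ∧ heapLt M ω k j)) →
        ∃ k₁ k₂ : Fin ω.length, k₁ ≠ k₂ ∧
          heapLt M ω i k₁ ∧ heapLt M ω k₁ j ∧
          heapLt M ω i k₂ ∧ heapLt M ω k₂ j ∧
          M (ω.get k₁) s = 3 ∧ M (ω.get k₂) s = 3 ∧ ω.get k₁ ≠ ω.get k₂ ∧
          (∀ k, heapLt M ω i k → heapLt M ω k j → M (ω.get k) s = 3 → k = k₁ ∨ k = k₂) := by
  intro ω hred hw s i j his hjs hij hno
  have hij' : (i : ℕ) < (j : ℕ) := heapLt_val_lt hij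
  have hjlen := j.isLt
  have hgi : ω[(i : ℕ)]'(by omega) = s := by rw [← List.get_eq_getElem]; exact his
  have hgj : ω[(j : ℕ)]'hjlen = s := by rw [← List.get_eq_getElem]; exact hjs
  obtain ⟨u, m, v, heq0, hulen, hmlen, hget0⟩ := split_two' ω (i : ℕ) (j : ℕ) hij' hjlen
  have heq : ω = u ++ s :: (m ++ s :: v) := by rw [hgi, hgj] at heq0; exact heq0
  have hget : ∀ (k : Fin ω.length) (r : ℕ) (hr : r < m.length),
      (k : ℕ) = (i : ℕ) + 1 + r → ω.get k = m[r]'hr := by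
    intro k r hr hkv
    rw [List.get_eq_getElem, getElem_idx_congr hkv]
    exact (hget0 r hr (by omega)).symm
  have hms : ∀ a ∈ m, a ≠ s := by
    intro a ham has
    subst has
    obtain ⟨r, hr, hra⟩ := List.mem_iff_getElem.mp ham
    obtain ⟨k, hkv⟩ : ∃ k : Fin ω.length, (k : ℕ) = (i : ℕ) + 1 + r := ⟨⟨_, by omega⟩, rfl⟩
    have hk : ω.get k = a := (hget k r hr hkv).trans hra
    refine hno k hk ⟨?_, ?_⟩
    · exact heapLt_single (by omega) (by rw [his, hk, M_diag hM]; omega)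
    · exact heapLt_single (by omega) (by rw [hjs, hk, M_diag hM]; omega)
  have hredd : cs.IsReduced (u ++ s :: (m ++ s :: v)) := by rw [← heq]; exact hred
  have hwd : cs.wordProd (u ++ s :: (m ++ s :: v)) = w := by rw [← heq]; exact hw
  have hcnt2 := weak cs hM w hfc hredd hwd hms
  have hsum : m.countP (fun a => decide (M a s ≠ 2)) ≤
      m.countP (fun a : Fin n => decide ((a : ℕ) + 1 = (s : ℕ))) +
      m.countP (fun a : Fin n => decide ((s : ℕ) + 1 = (a : ℕ))) := by
    refine countP_le_add ?_
    intro a ha hr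
    have hMat : M a s ≠ 2 := by simpa using hr
    rcases adj_of_ne_two hM (hms a ha) hMat with h | h
    · left; simpa using h
    · right; simpa using h
  have hm1 : m.countP (fun a : Fin n => decide ((a : ℕ) + 1 = (s : ℕ))) ≤ 1 :=
    below_le_one cs hM w hfc hredd hwd hms
  have hp1 : m.countP (fun a : Fin n => decide ((s : ℕ) + 1 = (a : ℕ))) ≤ 1 :=
    above_le_one cs hM w hfc hredd hwd hms
  have hmeq : m.countP (fun a : Fin n => decide ((a : ℕ) + 1 = (s : ℕ))) = 1 := by omega
  have hpeq : m.countP (fun a : Fin n => decide ((s : ℕ) + 1 = (a : ℕ))) = 1 := by omega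
  obtain ⟨q₁, a, q₂, hqm, hqa, hq1, hq2⟩ := countP_one_split hmeq
  obtain ⟨r₁, b, r₂, hrm, hrb, hr1, hr2⟩ := countP_one_split hpeq
  have ha' : (a : ℕ) + 1 = (s : ℕ) := by simpa using hqa
  have hb' : (s : ℕ) + 1 = (b : ℕ) := by simpa using hrb
  have hql : q₁.length < m.length := by rw [hqm]; simp
  have hrl : r₁.length < m.length := by rw [hrm]; simp
  obtain ⟨k₁, hk1v⟩ : ∃ k : Fin ω.length, (k : ℕ) = (i : ℕ) + 1 + q₁.length :=
    ⟨⟨_, by omega⟩, rfl⟩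
  obtain ⟨k₂, hk2v⟩ : ∃ k : Fin ω.length, (k : ℕ) = (i : ℕ) + 1 + r₁.length :=
    ⟨⟨_, by omega⟩, rfl⟩
  have hk1 : ω.get k₁ = a := by
    rw [hget k₁ q₁.length hql hk1v, getElem_of_eq' hqm]
    exact getElem_append_middle q₁ q₂ a rfl _
  have hk2 : ω.get k₂ = b := by
    rw [hget k₂ r₁.length hrl hk2v, getElem_of_eq' hrm]
    exact getElem_append_middle r₁ r₂ b rfl _
  have hlab : ω.get k₁ ≠ ω.get k₂ := by
    rw [hk1, hk2]
    intro he
    have : (a : ℕ) = (b : ℕ) := congrArg Fin.val he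
    omega
  have hM1 : M (ω.get k₁) s = 3 := by rw [hk1]; exact M_of_adj hM (Or.inl ha')
  have hM2 : M (ω.get k₂) s = 3 := by rw [hk2]; exact M_of_adj hM (Or.inr hb')
  have hMs1 : M s (ω.get k₁) = 3 := by rw [M.symmetric]; exact hM1
  have hMs2 : M s (ω.get k₂) = 3 := by rw [M.symmetric]; exact hM2
  refine ⟨k₁, k₂, ?_, ?_, ?_, ?_, ?_, hM1, hM2, hlab, ?_⟩
  · intro he
    exact hlab (congrArg ω.get he)
  · exact heapLt_single (by omega) (by rw [his, hMs1]; omega)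
  · exact heapLt_single (by omega) (by rw [hjs, hM1]; omega)
  · exact heapLt_single (by omega) (by rw [his, hMs2]; omega)
  · exact heapLt_single (by omega) (by rw [hjs, hM2]; omega)
  · intro k hik hkj hk3
    have hikv : (i : ℕ) < (k : ℕ) := heapLt_val_lt hik
    have hkjv : (k : ℕ) < (j : ℕ) := heapLt_val_lt hkj
    have hrk : (k : ℕ) - ((i : ℕ) + 1) < m.length := by omega
    have hkr : ω.get k = m[(k : ℕ) - ((i : ℕ) + 1)]'hrk :=
      hget k _ hrk (by omega)
    rcases adj_of_eq_three hM hk3 with hL | hR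
    · left
      have hp : (fun a : Fin n => decide ((a : ℕ) + 1 = (s : ℕ)))
          (m[(k : ℕ) - ((i : ℕ) + 1)]'hrk) = true := by
        simp only [decide_eq_true_eq, ← hkr]
        exact hL
      have := countP_unique_idx hqm hq1 hq2 hrk hp
      exact Fin.ext (by omega)
    · right
      have hp : (fun a : Fin n => decide ((s : ℕ) + 1 = (a : ℕ)))
          (m[(k : ℕ) - ((i : ℕ) + 1)]'hrk) = true := by
        simp only [decide_eq_true_eq, ← hkr]
        exact hR
      have := countP_unique_idx hrm hr1 hr2 hrk hp
      exact Fin.ext (by omega)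

end Stmt8Aux

open Stmt8Aux

/-- in type `A_n` (a path with all edge weights 3), for a fully commutative
element `w` and a generator `s`, every open `s`-interval of the heap contains exactly two
elements whose labels are adjacent to `s`, and these labels are distinct.  In particular,
if `s` is an endpoint of the path, any reduced word of `w` contains at most one
occurrence of `s`. -/
theorem stmt8 {W : Type*} [Group W] (n : ℕ) (hn : 1 ≤ n)
    {M : CoxeterMatrix (Fin n)} (cs : CoxeterSystem M W)
    (hM : ∀ i j : Fin n, M i j =
      if i = j then 1 else if (i : ℕ) + 1 = (j : ℕ) ∨ (j : ℕ) + 1 = (i : ℕ) then 3 else 2)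
    (w : W) (hfc : FullyCommutative cs w) :
    (∀ ω : List (Fin n), cs.IsReduced ω → cs.wordProd ω = w →
      ∀ (s : Fin n) (i j : Fin ω.length), ω.get i = s → ω.get j = s → heapLt M ω i j →
        (∀ k, ω.get k = s → ¬ (heapLt M ω i k ∧ heapLt M ω k j)) →
        ∃ k₁ k₂ : Fin ω.length, k₁ ≠ k₂ ∧
          heapLt M ω i k₁ ∧ heapLt M ω k₁ j ∧
          heapLt M ω i k₂ ∧ heapLt M ω k₂ j ∧
          M (ω.get k₁) s = 3 ∧ M (ω.get k₂) s = 3 ∧ ω.get k₁ ≠ ω.get k₂ ∧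
          (∀ k, heapLt M ω i k → heapLt M ω k j → M (ω.get k) s = 3 → k = k₁ ∨ k = k₂)) ∧
    (∀ ω : List (Fin n), cs.IsReduced ω → cs.wordProd ω = w →
      ∀ s : Fin n, ((s : ℕ) = 0 ∨ (s : ℕ) = n - 1) → ω.count s ≤ 1) := by
  have hMA : IsTypeA M := hM
  refine ⟨main1 cs hMA w hfc, ?_⟩
  intro ω hred hw s hend
  by_contra hcnt
  push_neg at hcnt
  have h2 : 2 ≤ List.countP (fun a => a == s) ω := by
    have he : ω.count s = List.countP (fun a => a == s) ω := rfl
    omega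
  obtain ⟨p₁, x, p', hω1, hx, hcp1⟩ := countP_pos_split (p := fun a => a == s) (m := ω)
    (by omega)
  have hxs : x = s := by simpa using hx
  rw [hxs] at hω1
  have hkey : (p₁ ++ s :: p').countP (fun a => a == s) =
      p₁.countP (fun a => a == s) + (p'.countP (fun a => a == s) + 1) := by
    simp [List.countP_append, List.countP_cons]
  rw [hω1] at h2
  obtain ⟨p₂, y, p₃, hp', hy, hcp2⟩ := countP_pos_split (p := fun a => a == s) (m := p')
    (by omega)
  have hys : y = s := by simpa using hy
  rw [hys] at hp'
  rw [hp'] at hω1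
  subst hω1
  set ωL : List (Fin n) := p₁ ++ s :: (p₂ ++ s :: p₃) with hωL
  have hassoc : ωL = (p₁ ++ s :: p₂) ++ s :: p₃ := by rw [hωL]; simp
  have hlen1 : p₁.length < ωL.length := by rw [hωL]; simp
  have hlenJ : (p₁ ++ s :: p₂).length < ωL.length := by rw [hassoc]; simp
  obtain ⟨i, hiv⟩ : ∃ i : Fin ωL.length, (i : ℕ) = p₁.length := ⟨⟨_, hlen1⟩, rfl⟩
  obtain ⟨j, hjv⟩ : ∃ j : Fin ωL.length, (j : ℕ) = (p₁ ++ s :: p₂).length := ⟨⟨_, hlenJ⟩, rfl⟩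
  have hjv' : (j : ℕ) = p₁.length + (p₂.length + 1) := by rw [hjv]; simp
  have hgi : ωL.get i = s := by
    rw [List.get_eq_getElem, getElem_idx_congr hiv]
    exact getElem_append_middle p₁ (p₂ ++ s :: p₃) s rfl _
  have hgj : ωL.get j = s := by
    rw [List.get_eq_getElem, getElem_idx_congr hjv, getElem_of_eq' hassoc]
    exact getElem_append_middle (p₁ ++ s :: p₂) p₃ s rfl _
  have hij : heapLt M ωL i j := by
    refine heapLt_single (by omega) ?_
    rw [hgi, hgj, M_diag hMA]
    omega
  have hno : ∀ k, ωL.get k = s → ¬ (heapLt M ωL i k ∧ heapLt M ωL k j) := by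
    intro k hk ⟨h1, h2⟩
    have hikv : (i : ℕ) < (k : ℕ) := heapLt_val_lt h1
    have hkjv : (k : ℕ) < (j : ℕ) := heapLt_val_lt h2
    have hrb : (k : ℕ) - p₁.length - 1 < p₂.length := by omega
    have hkget : ωL.get k = p₂[(k : ℕ) - p₁.length - 1]'hrb := by
      rw [List.get_eq_getElem, getElem_of_eq' hassoc,
        List.getElem_append_left (by simp; omega), List.getElem_append_right (by omega),
        List.getElem_cons, dif_neg (by omega)]
    have hmem : s ∈ p₂ := by
      rw [hk] at hkget
      exact hkget ▸ List.getElem_mem hrb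
    have : 0 < p₂.countP (fun a => a == s) :=
      List.countP_pos_iff.mpr ⟨s, hmem, by simp⟩
    omega
  obtain ⟨k₁, k₂, hne, _, _, _, _, h31, h32, hlab, _⟩ :=
    main1 cs hMA w hfc ωL hred hw s i j hgi hgj hij hno
  have adj1 := adj_of_eq_three hMA h31
  have adj2 := adj_of_eq_three hMA h32
  have hlab' : ((ωL.get k₁ : Fin n) : ℕ) ≠ ((ωL.get k₂ : Fin n) : ℕ) :=
    fun h => hlab (Fin.ext h)
  have hb1 := (ωL.get k₁).isLt
  have hb2 := (ωL.get k₂).isLt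
  have hbs := s.isLt
  rcases hend with h | h <;> rcases adj1 with h1 | h1 <;> rcases adj2 with h2 | h2 <;> omega
end

section
/- Let G be an undirected graph and suppose C = (v₁,...,v_n,v₁) is a cycle of maximal length in G such that every vertex of G not on C is adjacent to every vertex of C. Then every vertex of G lies on C. -/
/-- if `C = (v 0, …, v (n-1), v 0)` is a cycle of maximal length in a graph
`G` and every vertex of `G` not on `C` is adjacent to every vertex of `C`, then every
vertex of `G` lies on `C`. -/
theorem stmt9 {V : Type*} (G : SimpleGraph V) (n : ℕ) (hn : 3 ≤ n) (v : ℕ → V)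
    (hinj : Set.InjOn v (Set.Iio n))
    (hcyc : ∀ i < n, G.Adj (v i) (v ((i + 1) % n)))
    (hmax : ∀ (m : ℕ) (w : ℕ → V), 3 ≤ m → Set.InjOn w (Set.Iio m) →
      (∀ i < m, G.Adj (w i) (w ((i + 1) % m))) → m ≤ n)
    (hadj : ∀ x : V, (∀ i < n, x ≠ v i) → ∀ i < n, G.Adj x (v i)) :
    ∀ x : V, ∃ i < n, v i = x := by
  intro x
  by_contra h
  push_neg at h
  have hx : ∀ i < n, x ≠ v i := fun i hi hxe => h i hi hxe.symm
  set w : ℕ → V := fun i => if i = 0 then x else v (i - 1) with hw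
  have hinj' : Set.InjOn w (Set.Iio (n + 1)) := by
    intro a ha b hb hab
    simp only [Set.mem_Iio] at ha hb
    simp only [hw] at hab
    rcases Nat.eq_zero_or_pos a with ha0 | ha0 <;>
      rcases Nat.eq_zero_or_pos b with hb0 | hb0
    · omega
    · subst ha0
      rw [if_pos rfl, if_neg (by omega)] at hab
      exact absurd hab (hx (b - 1) (by omega))
    · subst hb0
      rw [if_neg (by omega), if_pos rfl] at hab
      exact absurd hab.symm (hx (a - 1) (by omega))
    · rw [if_neg (by omega), if_neg (by omega)] at hab
      have := hinj (Set.mem_Iio.2 (by omega : a - 1 < n))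
        (Set.mem_Iio.2 (by omega : b - 1 < n)) hab
      omega
  have hcyc' : ∀ i < n + 1, G.Adj (w i) (w ((i + 1) % (n + 1))) := by
    intro i hi
    rcases Nat.eq_zero_or_pos i with h0 | h0
    · subst h0
      have : (0 + 1) % (n + 1) = 1 := Nat.mod_eq_of_lt (by omega)
      rw [this]
      simp only [hw, if_pos rfl, if_neg (by omega : (1:ℕ) ≠ 0)]
      exact hadj x hx 0 (by omega)
    · rcases eq_or_lt_of_le (Nat.succ_le_of_lt (by omega : i < n + 1)) with he | hlt
      · have hin : i = n := by omega
        subst hin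
        have : (i + 1) % (i + 1) = 0 := by simp
        rw [this]
        simp only [hw, if_neg (by omega : i ≠ 0), if_pos rfl]
        exact (hadj x hx (i - 1) (by omega)).symm
      · have hin : i < n := by omega
        have : (i + 1) % (n + 1) = i + 1 := Nat.mod_eq_of_lt (by omega)
        rw [this]
        simp only [hw, if_neg (by omega : i ≠ 0), if_neg (by omega : i + 1 ≠ 0),
          Nat.add_sub_cancel]
        have := hcyc (i - 1) (by omega)
        have heq : (i - 1 + 1) % n = i := by
          rw [Nat.sub_add_cancel (by omega)]
          exact Nat.mod_eq_of_lt hin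
        rwa [heq] at this
  have := hmax (n + 1) w (by omega) hinj' hcyc'
  omega
end

section
/- Let W be a Coxeter group whose diagram is acyclic with maximal edge weight 3 (i.e., a simply-laced tree). If the diagram has two distinct vertices each of degree at least 3, or one vertex of degree at least 4, then the diagram contains (as a subgraph) a path v₁—v₂—⋯—v_n (n ≥ 1) together with two extra vertices a,b adjacent to v₁ and two extra vertices c,d adjacent to v_n, all edges of weight 3 (the affine D-type configuration). -/
open SimpleGraph

private lemma getVert_mem_support' {V : Type*} {G : SimpleGraph V} {u v : V}
    (p : G.Walk u v) (i : ℕ) : p.getVert i ∈ p.support := by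
  induction p generalizing i with
  | nil => simp [Walk.getVert]
  | cons h q ih =>
    cases i with
    | zero => simp [Walk.getVert]
    | succ n => simp only [Walk.getVert, Walk.support_cons, List.mem_cons]; exact Or.inr (ih n)

private lemma path_getVert_inj {V : Type*} {G : SimpleGraph V} {u v : V}
    {p : G.Walk u v} (hp : p.IsPath) {i j : ℕ} (hi : i ≤ p.length) (hj : j ≤ p.length)
    (h : p.getVert i = p.getVert j) : i = j := by
  induction p generalizing i j with
  | nil => simp only [Walk.length_nil, Nat.le_zero] at hi hj; omega
  | cons hadj q ih =>
    rw [Walk.cons_isPath_iff] at hp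
    cases i with
    | zero =>
      cases j with
      | zero => rfl
      | succ m =>
        exfalso; apply hp.2
        rw [Walk.getVert_zero, Walk.getVert_cons_succ] at h
        rw [h]; exact getVert_mem_support' q m
    | succ n =>
      cases j with
      | zero =>
        exfalso; apply hp.2
        rw [Walk.getVert_cons_succ, Walk.getVert_zero] at h
        rw [← h]; exact getVert_mem_support' q n
      | succ m =>
        simp only [Walk.getVert_cons_succ] at h
        simp only [Walk.length_cons] at hi hj
        have := ih hp.1 (by omega) (by omega) h
        omega

/-- A neighbor of the start of a path which is not the second vertex is not on the path. -/
private lemma not_mem_support_of_adj {V : Type*} {G : SimpleGraph V}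
    (hac : G.IsAcyclic) {x y u : V} {p : G.Walk x y} (hp : p.IsPath)
    (hxu : G.Adj x u) (h1 : u ≠ p.getVert 1) : u ∉ p.support := by
  classical
  intro hu
  have hq : (p.takeUntil u hu).IsPath := hp.takeUntil hu
  have := isAcyclic_iff_path_unique.mp hac ⟨p.takeUntil u hu, hq⟩ (Path.singleton hxu)
  have heq : p.takeUntil u hu = Walk.cons hxu Walk.nil := congrArg Subtype.val this
  have hspec := p.take_spec hu
  rw [heq] at hspec
  apply h1
  rw [← hspec]
  simp [Walk.getVert_cons_succ, Walk.getVert_zero]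

/-- A common neighbor of the endpoints of a path between distinct vertices lies on the path. -/
private lemma mem_support_of_adj_adj {V : Type*} {G : SimpleGraph V}
    (hac : G.IsAcyclic) {x y u : V} {p : G.Walk x y} (hp : p.IsPath) (hxy : x ≠ y)
    (hxu : G.Adj x u) (huy : G.Adj u y) : u ∈ p.support := by
  have hq : (Walk.cons hxu (Walk.cons huy Walk.nil)).IsPath := by
    refine (Path.singleton huy).2.cons ?_
    simp [Walk.support_cons, hxu.ne, hxy]
  have := isAcyclic_iff_path_unique.mp hac ⟨p, hp⟩ ⟨_, hq⟩
  have heq : p = Walk.cons hxu (Walk.cons huy Walk.nil) := congrArg Subtype.val this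
  rw [heq]
  simp

private lemma two_distinct_avoiding {V : Type*} {s : Set V} (h3 : 3 ≤ s.ncard) {e : V}
    (he : e ∈ s) : ∃ a b, a ∈ s ∧ b ∈ s ∧ a ≠ b ∧ a ≠ e ∧ b ≠ e := by
  have hfin : s.Finite := by
    by_contra hinf
    rw [Set.Infinite.ncard hinf] at h3
    omega
  have hd : (s \ {e}).ncard = s.ncard - 1 := by
    rw [Set.ncard_diff (by simpa using he) (Set.finite_singleton e), Set.ncard_singleton]
  have h2 : 1 < (s \ {e}).ncard := by omega
  obtain ⟨a, ha, hae⟩ := Set.exists_ne_of_one_lt_ncard h2 e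
  obtain ⟨b, hb, hba⟩ := Set.exists_ne_of_one_lt_ncard h2 a
  exact ⟨a, b, ha.1, hb.1, hba.symm, hae, hb.2⟩

private lemma four_distinct {V : Type*} {s : Set V} (h4 : 4 ≤ s.ncard) :
    ∃ a b c d, a ∈ s ∧ b ∈ s ∧ c ∈ s ∧ d ∈ s ∧
      a ≠ b ∧ a ≠ c ∧ a ≠ d ∧ b ≠ c ∧ b ≠ d ∧ c ≠ d := by
  obtain ⟨a, ha⟩ := Set.nonempty_of_ncard_ne_zero (s := s) (by omega)
  have h1 : (s \ {a}).ncard = s.ncard - 1 :=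
    by simpa using Set.ncard_diff (by simpa using ha) (Set.finite_singleton a)
  obtain ⟨b, hb⟩ := Set.nonempty_of_ncard_ne_zero (s := s \ {a}) (by omega)
  have h2 : ((s \ {a}) \ {b}).ncard = (s \ {a}).ncard - 1 :=
    by simpa using Set.ncard_diff (by simpa using hb) (Set.finite_singleton b)
  obtain ⟨c, hc⟩ := Set.nonempty_of_ncard_ne_zero (s := (s \ {a}) \ {b}) (by omega)
  have h3 : (((s \ {a}) \ {b}) \ {c}).ncard = ((s \ {a}) \ {b}).ncard - 1 :=
    by simpa using Set.ncard_diff (by simpa using hc) (Set.finite_singleton c)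
  obtain ⟨d, hd⟩ := Set.nonempty_of_ncard_ne_zero (s := ((s \ {a}) \ {b}) \ {c}) (by omega)
  simp only [Set.mem_diff, Set.mem_singleton_iff] at hb hc hd
  exact ⟨a, b, c, d, ha, hb.1, hc.1.1, hd.1.1.1, Ne.symm hb.2, Ne.symm hc.1.2,
    Ne.symm hd.1.1.2, Ne.symm hc.2, Ne.symm hd.1.2, Ne.symm hd.2⟩

/-- let `G` be a tree (connected and acyclic).  If `G` has two distinct
vertices of degree at least 3, or a vertex of degree at least 4, then `G` contains the
affine `D`-type configuration: a path `v 0 — v 1 — ⋯ — v (n-1)` (`n ≥ 1`) together with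
two extra vertices `a, b` adjacent to `v 0` and two extra vertices `c, d` adjacent to
`v (n-1)`. -/
theorem stmt15 {S : Type*} (G : SimpleGraph S)
    (hconn : G.Connected) (hacyclic : G.IsAcyclic)
    (hdeg : (∃ x y : S, x ≠ y ∧ 3 ≤ (G.neighborSet x).ncard ∧ 3 ≤ (G.neighborSet y).ncard) ∨
      (∃ x : S, 4 ≤ (G.neighborSet x).ncard)) :
    ∃ (n : ℕ) (_ : 1 ≤ n) (v : ℕ → S) (a b c d : S),
      Set.InjOn v (Set.Iio n) ∧
      (∀ i, i + 1 < n → G.Adj (v i) (v (i + 1))) ∧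
      G.Adj a (v 0) ∧ G.Adj b (v 0) ∧ G.Adj c (v (n - 1)) ∧ G.Adj d (v (n - 1)) ∧
      a ≠ b ∧ c ≠ d ∧ a ≠ c ∧ a ≠ d ∧ b ≠ c ∧ b ≠ d ∧
      (∀ i < n, a ≠ v i ∧ b ≠ v i ∧ c ≠ v i ∧ d ≠ v i) := by
  classical
  rcases hdeg with ⟨x, y, hxy, hx3, hy3⟩ | ⟨x, hx4⟩
  · -- case: two distinct trivalent vertices
    obtain ⟨w⟩ := hconn.preconnected x y
    set p : G.Walk x y := w.toPath.1 with hpdef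
    have hp : p.IsPath := w.toPath.2
    set m : ℕ := p.length with hm
    have hm1 : 1 ≤ m := by
      by_contra h
      have : p.length = 0 := by omega
      exact hxy (Walk.eq_of_length_eq_zero this)
    -- second vertex from x, and second vertex from y
    have hadj1 : G.Adj x (p.getVert 1) := by
      have := p.adj_getVert_succ (i := 0) (by omega)
      simpa using this
    have hadjm : G.Adj y (p.reverse.getVert 1) := by
      have := p.reverse.adj_getVert_succ (i := 0) (by simp; omega)
      simpa using this
    obtain ⟨a, b, ha, hb, hab, hae, hbe⟩ := two_distinct_avoiding hx3 hadj1
    obtain ⟨c, d, hc, hd, hcd, hce, hde⟩ := two_distinct_avoiding hy3 hadjm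
    rw [mem_neighborSet] at ha hb hc hd
    have hans : a ∉ p.support := not_mem_support_of_adj hacyclic hp ha hae
    have hbns : b ∉ p.support := not_mem_support_of_adj hacyclic hp hb hbe
    have hcns : c ∉ p.support := by
      have := not_mem_support_of_adj hacyclic hp.reverse hc hce
      rwa [Walk.support_reverse, List.mem_reverse] at this
    have hdns : d ∉ p.support := by
      have := not_mem_support_of_adj hacyclic hp.reverse hd hde
      rwa [Walk.support_reverse, List.mem_reverse] at this
    have hac : a ≠ c := fun h => hans (mem_support_of_adj_adj hacyclic hp hxy ha (h ▸ hc.symm))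
    have had : a ≠ d := fun h => hans (mem_support_of_adj_adj hacyclic hp hxy ha (h ▸ hd.symm))
    have hbc : b ≠ c := fun h => hbns (mem_support_of_adj_adj hacyclic hp hxy hb (h ▸ hc.symm))
    have hbd : b ≠ d := fun h => hbns (mem_support_of_adj_adj hacyclic hp hxy hb (h ▸ hd.symm))
    refine ⟨m + 1, by omega, fun i => p.getVert i, a, b, c, d, ?_, ?_, ?_, ?_, ?_, ?_,
      hab, hcd, hac, had, hbc, hbd, ?_⟩
    · intro i hi j hj hij
      exact path_getVert_inj hp (by simpa using Nat.lt_succ_iff.mp hi)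
        (by simpa using Nat.lt_succ_iff.mp hj) hij
    · intro i hi
      exact p.adj_getVert_succ (by omega)
    · simpa using ha.symm
    · simpa using hb.symm
    · have hgm : p.getVert m = y := by rw [hm]; exact p.getVert_length
      simp only [Nat.add_sub_cancel, hgm]
      exact hc.symm
    · have hgm : p.getVert m = y := by rw [hm]; exact p.getVert_length
      simp only [Nat.add_sub_cancel, hgm]
      exact hd.symm
    · intro i _
      exact ⟨fun h => hans (h ▸ getVert_mem_support' p i),
        fun h => hbns (h ▸ getVert_mem_support' p i),
        fun h => hcns (h ▸ getVert_mem_support' p i),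
        fun h => hdns (h ▸ getVert_mem_support' p i)⟩
  · -- case: one vertex of degree 4
    obtain ⟨a, b, c, d, ha, hb, hc, hd, hab, hac, had, hbc, hbd, hcd⟩ := four_distinct hx4
    rw [mem_neighborSet] at ha hb hc hd
    refine ⟨1, le_refl 1, fun _ => x, a, b, c, d, ?_, ?_, ha.symm, hb.symm, hc.symm, hd.symm,
      hab, hcd, hac, had, hbc, hbd, ?_⟩
    · intro i hi j hj _
      simp only [Set.mem_Iio] at hi hj
      omega
    · intro i hi; omega
    · intro i _
      exact ⟨ha.ne', hb.ne', hc.ne', hd.ne'⟩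
end
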